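/- arXiv:1902.04170 — 4 statements merged into one kernel-verified Lean document; each statement's English description precedes it below -/
import Mathlib

section
/- Let X be a Banach space. If for every r ≥ 1, every n ∈ ℕ, every x₁**,...,xₙ** ∈ r·B_{X**}, and every ε > 0 there exists y** ∈ B_{X**} \ {0} with ‖xᵢ** + y**‖ ≥ (1−ε)(‖xᵢ**‖ + 1) for all i, then the same holds with the witness chosen in B_X \ {0}: there exists y ∈ B_X \ {0} with ‖xᵢ** + y‖ > (1−ε)(‖xᵢ**‖ + 1) for all i. -/
open NormedSpace

/-- Finite-dimensional Goldstine: any element of the closed unit ball of the bidual can be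
approximated, against finitely many functionals, by elements of the closed unit ball of `X`. -/
lemma goldstine_fin {X : Type*} [NormedAddCommGroup X] [NormedSpace ℝ X]
    (m : ℕ) (f : Fin m → StrongDual ℝ X) (z : StrongDual ℝ (StrongDual ℝ X)) (hz : ‖z‖ ≤ 1)
    {δ : ℝ} (hδ : 0 < δ) :
    ∃ y : X, ‖y‖ ≤ 1 ∧ ∀ j, |f j y - z (f j)| < δ := by
  classical
  set L : X →ₗ[ℝ] (Fin m → ℝ) := LinearMap.pi (fun j => (f j : X →ₗ[ℝ] ℝ)) with hL
  set K : Set (Fin m → ℝ) := L '' Metric.closedBall (0 : X) 1 with hK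
  set c : Fin m → ℝ := fun j => z (f j) with hc
  have hcK : c ∈ closure K := by
    by_contra hcK
    obtain ⟨φ, u, hsep, hu⟩ :=
      geometric_hahn_banach_closed_point
        (((convex_closedBall (0 : X) 1).linear_image L).closure) isClosed_closure hcK
    -- the functional `g` on `X` induced by `φ`
    set g : StrongDual ℝ X := ∑ j, φ (Pi.single j 1) • f j with hg
    have key : ∀ v : Fin m → ℝ, φ v = ∑ j, v j * φ (Pi.single j 1) := by
      intro v
      conv_lhs => rw [← Finset.univ_sum_single v]
      rw [map_sum]
      refine Finset.sum_congr rfl fun j _ => ?_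
      have hsingle : (Pi.single j (v j) : Fin m → ℝ) = v j • (Pi.single j 1 : Fin m → ℝ) := by
        ext k
        rcases eq_or_ne k j with rfl | hk
        · simp
        · simp [Pi.single_apply, hk]
      rw [hsingle, map_smul, smul_eq_mul]
    have hgy : ∀ y : X, g y = φ (L y) := by
      intro y
      rw [key]
      simp [hg, hL, ContinuousLinearMap.sum_apply, ContinuousLinearMap.smul_apply,
        smul_eq_mul, mul_comm]
    have hzg : z g = φ c := by
      rw [key]
      simp [hg, hc, map_sum, map_smul, smul_eq_mul, mul_comm]
    -- bound on `g` on the unit ball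
    have hball : ∀ y : X, ‖y‖ ≤ 1 → g y < u := by
      intro y hy
      rw [hgy]
      exact hsep _ (subset_closure ⟨y, by simpa [Metric.mem_closedBall] using hy, rfl⟩)
    have hu0 : 0 < u := by
      have := hball 0 (by simp)
      simpa using this
    have hgle : ‖g‖ ≤ u := by
      refine ContinuousLinearMap.opNorm_le_bound g hu0.le fun y => ?_
      rcases eq_or_ne y 0 with rfl | hy0
      · simp
      · have hny : 0 < ‖y‖ := norm_pos_iff.2 hy0
        have h1 : ‖(‖y‖⁻¹ • y)‖ ≤ 1 := by
          rw [norm_smul, norm_inv, norm_norm, inv_mul_cancel₀ hny.ne']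
        have h1' : ‖(-(‖y‖⁻¹ • y))‖ ≤ 1 := by rwa [norm_neg]
        have h2 := hball _ h1
        have h3 := hball _ h1'
        rw [map_smul, smul_eq_mul] at h2
        rw [map_neg, map_smul, smul_eq_mul] at h3
        have habs : |g y| ≤ u * ‖y‖ := by
          rw [abs_le]
          have h2' := mul_lt_mul_of_pos_left h2 hny
          have h3' := mul_lt_mul_of_pos_left h3 hny
          have hcancel : ‖y‖ * ‖y‖⁻¹ = 1 := mul_inv_cancel₀ hny.ne'
          rw [← mul_assoc, hcancel, one_mul] at h2'
          rw [mul_neg, ← mul_assoc, hcancel, one_mul] at h3'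
          constructor <;> linarith [h2', h3', mul_comm ‖y‖ u]
        rw [Real.norm_eq_abs]
        exact habs
    have hfin : z g ≤ u := by
      calc z g ≤ |z g| := le_abs_self _
        _ ≤ ‖z‖ * ‖g‖ := z.le_opNorm g
        _ ≤ 1 * u := mul_le_mul hz hgle (norm_nonneg _) zero_le_one
        _ = u := one_mul u
    rw [hzg] at hfin
    exact absurd hu (not_lt.2 hfin)
  rw [Metric.mem_closure_iff] at hcK
  obtain ⟨b, ⟨y, hy, rfl⟩, hb⟩ := hcK δ hδ
  refine ⟨y, by simpa [Metric.mem_closedBall] using hy, fun j => ?_⟩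
  have := (dist_le_pi_dist (L y) c j).trans_lt (by simpa [dist_comm] using hb)
  simpa [Real.dist_eq, hL, hc] using this

/-- (iii) ⇒ (iii') of Lemma 2.1, via Goldstine's theorem. -/
theorem stmt_1 (X : Type*) [NormedAddCommGroup X] [NormedSpace ℝ X] [CompleteSpace X]
    (h : ∀ r : ℝ, 1 ≤ r → ∀ n : ℕ, ∀ x : Fin n → StrongDual ℝ (StrongDual ℝ X),
      (∀ i, ‖x i‖ ≤ r) → ∀ ε : ℝ, 0 < ε →
        ∃ y : StrongDual ℝ (StrongDual ℝ X), ‖y‖ ≤ 1 ∧ y ≠ 0 ∧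
          ∀ i, (1 - ε) * (‖x i‖ + 1) ≤ ‖x i + y‖) :
    ∀ r : ℝ, 1 ≤ r → ∀ n : ℕ, ∀ x : Fin n → StrongDual ℝ (StrongDual ℝ X),
      (∀ i, ‖x i‖ ≤ r) → ∀ ε : ℝ, 0 < ε →
        ∃ y : X, ‖y‖ ≤ 1 ∧ y ≠ 0 ∧
          ∀ i, (1 - ε) * (‖x i‖ + 1) < ‖x i + inclusionInDoubleDual ℝ X y‖ := by
  classical
  intro r hr n x hx ε hε
  -- replace ε by ε' = min ε (1/2); it suffices to prove it for ε'
  set ε' : ℝ := min ε (1/2) with hε'def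
  have hε'pos : 0 < ε' := lt_min hε (by norm_num)
  have hε'le : ε' ≤ ε := min_le_left _ _
  have hε'half : ε' ≤ 1/2 := min_le_right _ _
  suffices H : ∃ y : X, ‖y‖ ≤ 1 ∧ y ≠ 0 ∧
      ∀ i, (1 - ε') * (‖x i‖ + 1) < ‖x i + inclusionInDoubleDual ℝ X y‖ by
    obtain ⟨y, hy1, hy2, hy3⟩ := H
    refine ⟨y, hy1, hy2, fun i => lt_of_le_of_lt ?_ (hy3 i)⟩
    have hpos : (0:ℝ) < ‖x i‖ + 1 := by positivity
    nlinarith [hpos]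
  -- apply hypothesis with ε'/2
  obtain ⟨w, hw1, hw2, hw3⟩ := h r hr n x hx (ε'/2) (by positivity)
  -- for each i, a strict inequality
  have hstrict : ∀ i, (1 - ε') * (‖x i‖ + 1) < ‖x i + w‖ := by
    intro i
    refine lt_of_lt_of_le ?_ (hw3 i)
    have hpos : (0:ℝ) < ‖x i‖ + 1 := by positivity
    nlinarith [hpos]
  -- for each i, pick a norming functional
  have hchoice : ∀ i : Fin n, ∃ f : StrongDual ℝ X, ‖f‖ ≤ 1 ∧
      (1 - ε') * (‖x i‖ + 1) < (x i + w) f := by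
    intro i
    obtain ⟨f, hf1, hf2⟩ :=
      (x i + w).exists_lt_apply_of_lt_opNorm (hstrict i)
    rcases le_or_gt 0 ((x i + w) f) with hpos | hneg
    · exact ⟨f, hf1.le, by rwa [Real.norm_eq_abs, abs_of_nonneg hpos] at hf2⟩
    · refine ⟨-f, by simpa using hf1.le, ?_⟩
      rw [map_neg]
      rwa [Real.norm_eq_abs, abs_of_neg hneg] at hf2
  choose f hf1 hf2 using hchoice
  -- a functional witnessing w ≠ 0
  obtain ⟨g₀, hg₀⟩ : ∃ g : StrongDual ℝ X, w g ≠ 0 := by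
    by_contra hcon
    push_neg at hcon
    exact hw2 (by ext g; simpa using hcon g)
  have hg₀norm : 0 < ‖g₀‖ := by
    refine norm_pos_iff.2 fun hg => ?_
    apply hg₀; rw [hg]; simp
  set g : StrongDual ℝ X := ‖g₀‖⁻¹ • g₀ with hg
  have hgle : ‖g‖ ≤ 1 := by
    rw [hg, norm_smul, norm_inv, norm_norm, inv_mul_cancel₀ hg₀norm.ne']
  have hwg : w g ≠ 0 := by
    rw [hg, map_smul, smul_eq_mul]
    exact mul_ne_zero (inv_ne_zero hg₀norm.ne') hg₀
  -- margins
  set δ : ℝ := min (|w g|)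
    (if hn : n = 0 then 1 else
      Finset.univ.inf' (Finset.univ_nonempty_iff.2 (Fin.pos_iff_nonempty.1 (Nat.pos_of_ne_zero hn)))
        (fun i => (x i + w) (f i) - (1 - ε') * (‖x i‖ + 1))) with hδdef
  have hδpos : 0 < δ := by
    refine lt_min (abs_pos.2 hwg) ?_
    split_ifs with hn
    · norm_num
    · rw [Finset.lt_inf'_iff]
      intro i _
      linarith [hf2 i]
  have hδle : ∀ i, δ ≤ (x i + w) (f i) - (1 - ε') * (‖x i‖ + 1) := by
    intro i
    refine le_trans (min_le_right _ _) ?_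
    have hn : n ≠ 0 := Fin.pos_iff_nonempty.1 i.pos |>.elim fun _ => by
      rintro rfl
      exact absurd i.2 (by omega)
    rw [dif_neg hn]
    exact Finset.inf'_le _ (Finset.mem_univ i)
  have hδg : δ ≤ |w g| := min_le_left _ _
  -- apply goldstine to the family (f's and g)
  obtain ⟨y, hy1, hy2⟩ := goldstine_fin (n + 1) (Fin.snoc f g) w hw1 hδpos
  refine ⟨y, hy1, ?_, ?_⟩
  · -- y ≠ 0 since g y is close to w g ≠ 0
    have := hy2 (Fin.last n)
    rw [Fin.snoc_last] at this
    intro hy0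
    rw [hy0, map_zero, zero_sub, abs_neg] at this
    exact absurd (lt_of_le_of_lt hδg this) (lt_irrefl _)
  · intro i
    have happ := hy2 i.castSucc
    rw [Fin.snoc_castSucc] at happ
    have hfi : (1 - ε') * (‖x i‖ + 1) < (x i) (f i) + f i y := by
      have h1 : f i y > w (f i) - δ := by
        have := abs_lt.1 happ
        linarith [this.1]
      have h2 := hδle i
      have : (x i + w) (f i) = x i (f i) + w (f i) := rfl
      linarith
    calc (1 - ε') * (‖x i‖ + 1) < (x i) (f i) + f i y := hfi
      _ = (x i + inclusionInDoubleDual ℝ X y) (f i) := by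
          simp [ContinuousLinearMap.add_apply, NormedSpace.dual_def]
      _ ≤ |(x i + inclusionInDoubleDual ℝ X y) (f i)| := le_abs_self _
      _ ≤ ‖x i + inclusionInDoubleDual ℝ X y‖ * ‖f i‖ :=
          (x i + inclusionInDoubleDual ℝ X y).le_opNorm (f i)
      _ ≤ ‖x i + inclusionInDoubleDual ℝ X y‖ * 1 :=
          mul_le_mul_of_nonneg_left (hf1 i) (by positivity)
      _ = _ := mul_one _
end

section
/- A Banach space X is octahedral if and only if for every n ∈ ℕ, every ε > 0, and every x₁,...,xₙ ∈ S_X there exists y ∈ S_X such that ‖xᵢ + y‖ ≥ 2 − ε for every i ∈ {1,...,n}. -/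
/-!
The unit sphere of a finite-dimensional subspace `F` is compact, so it has a finite `δ`-net
`f₁, …, fₙ`. If `‖fᵢ + y‖ ≥ 2 - δ` for all `i`, the triangle inequality propagates this first
along rays, `‖t • fᵢ + y‖ ≥ (1 - δ)(1 + t)`, and then to all of `F`, since every `x ∈ F` lies
within `δ‖x‖` of some `‖x‖ • fᵢ`.
-/

/-- A norm on a Banach space is octahedral if for every finite-dimensional subspace `E`
and every `ε > 0` there is a norm-one `y` with `‖x + y‖ ≥ (1-ε)(‖x‖+‖y‖)` for all `x ∈ E`. -/
def IsOctahedral (E : Type*) [NormedAddCommGroup E] [NormedSpace ℝ E] : Prop :=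
  ∀ F : Subspace ℝ E, FiniteDimensional ℝ F → ∀ ε : ℝ, 0 < ε →
    ∃ y : E, ‖y‖ = 1 ∧ ∀ x ∈ F, (1 - ε) * (‖x‖ + ‖y‖) ≤ ‖x + y‖

lemma IsCompact.exists_fin_net {α : Type*} [PseudoMetricSpace α] {S : Set α} (hS : IsCompact S)
    {δ : ℝ} (hδ : 0 < δ) :
    ∃ (n : ℕ) (f : Fin n → α), (∀ i, f i ∈ S) ∧ ∀ u ∈ S, ∃ i, dist u (f i) < δ := by
  obtain ⟨t, htS, htfin, hcover⟩ := hS.finite_cover_balls hδ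
  obtain ⟨n, f, -, rfl⟩ := htfin.fin_param
  refine ⟨n, f, fun i => htS ⟨i, rfl⟩, fun u hu => ?_⟩
  obtain ⟨_, ⟨i, rfl⟩, hi⟩ := Set.mem_iUnion₂.mp (hcover hu)
  exact ⟨i, hi⟩

section

variable {X : Type*} [NormedAddCommGroup X] [NormedSpace ℝ X]

lemma Submodule.isCompact_inter_sphere (F : Submodule ℝ X) [FiniteDimensional ℝ F] :
    IsCompact ((F : Set X) ∩ Metric.sphere 0 1) := by
  have : (F : Set X) ∩ Metric.sphere 0 1 = Subtype.val '' Metric.sphere (0 : F) 1 := by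
    ext u
    simp [and_comm]
  rw [this]
  exact (isCompact_sphere 0 1).image continuous_subtype_val

lemma one_sub_mul_one_add_le_norm_smul_add {u y : X} (hu : ‖u‖ = 1) (hy : ‖y‖ = 1) {δ : ℝ}
    (hδ : 0 ≤ δ) (h : 2 - δ ≤ ‖u + y‖) {t : ℝ} (ht : 0 ≤ t) :
    (1 - δ) * (1 + t) ≤ ‖t • u + y‖ := by
  rcases le_total t 1 with hle | hge
  · have key : ‖u + y‖ ≤ ‖t • u + y‖ + (1 - t) := calc
      ‖u + y‖ = ‖(t • u + y) + (1 - t) • u‖ := by congr 1; module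
      _ ≤ ‖t • u + y‖ + ‖(1 - t) • u‖ := norm_add_le _ _
      _ = ‖t • u + y‖ + (1 - t) := by
        rw [norm_smul_of_nonneg (by linarith), hu, mul_one]
    nlinarith
  · have key : t * ‖u + y‖ ≤ ‖t • u + y‖ + (t - 1) := calc
      t * ‖u + y‖ = ‖(t • u + y) + (t - 1) • y‖ := by
        rw [← norm_smul_of_nonneg ht]; congr 1; module
      _ ≤ ‖t • u + y‖ + ‖(t - 1) • y‖ := norm_add_le _ _
      _ = ‖t • u + y‖ + (t - 1) := by
        rw [norm_smul_of_nonneg (by linarith), hy, mul_one]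
    nlinarith

lemma one_sub_two_mul_one_add_le_norm_smul_add {u v y : X} (hv : ‖v‖ = 1) (hy : ‖y‖ = 1)
    {δ : ℝ} (hδ : 0 ≤ δ) (h : 2 - δ ≤ ‖v + y‖) (huv : ‖u - v‖ ≤ δ) {t : ℝ} (ht : 0 ≤ t) :
    (1 - 2 * δ) * (1 + t) ≤ ‖t • u + y‖ := by
  have key : ‖t • v + y‖ ≤ ‖t • u + y‖ + t * δ := calc
    ‖t • v + y‖ = ‖(t • u + y) + t • (v - u)‖ := by congr 1; module
    _ ≤ ‖t • u + y‖ + ‖t • (v - u)‖ := norm_add_le _ _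
    _ ≤ ‖t • u + y‖ + t * δ := by
      rw [norm_smul_of_nonneg ht, norm_sub_rev]
      gcongr
  nlinarith [one_sub_mul_one_add_le_norm_smul_add hv hy hδ h ht]

lemma IsOctahedral.exists_two_sub_le_norm_add (h : IsOctahedral X) {n : ℕ} {ε : ℝ} (hε : 0 < ε)
    (x : Fin n → X) (hx : ∀ i, ‖x i‖ = 1) :
    ∃ y : X, ‖y‖ = 1 ∧ ∀ i, 2 - ε ≤ ‖x i + y‖ := by
  obtain ⟨y, hy, hxy⟩ := h (Submodule.span ℝ (Set.range x))
    (FiniteDimensional.span_of_finite ℝ (Set.finite_range x)) (ε / 2) (half_pos hε)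
  refine ⟨y, hy, fun i => ?_⟩
  have hi := hxy (x i) (Submodule.subset_span (Set.mem_range_self i))
  rw [hx i, hy] at hi
  linarith

lemma isOctahedral_of_forall_exists_two_sub_le_norm_add
    (h : ∀ n : ℕ, ∀ ε : ℝ, 0 < ε → ∀ x : Fin n → X, (∀ i, ‖x i‖ = 1) →
      ∃ y : X, ‖y‖ = 1 ∧ ∀ i, 2 - ε ≤ ‖x i + y‖) :
    IsOctahedral X := by
  intro F _ ε hε
  obtain ⟨n, f, hfS, hnet⟩ := F.isCompact_inter_sphere.exists_fin_net (half_pos hε)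
  have hf : ∀ i, ‖f i‖ = 1 := fun i => mem_sphere_zero_iff_norm.mp (hfS i).2
  obtain ⟨y, hy, hfy⟩ := h n (ε / 2) (half_pos hε) f hf
  refine ⟨y, hy, fun x hx => ?_⟩
  rcases eq_or_ne x 0 with rfl | hx0
  · simp only [norm_zero, zero_add, hy]
    linarith
  have hxn : ‖x‖ ≠ 0 := norm_ne_zero_iff.mpr hx0
  obtain ⟨i, hi⟩ := hnet (‖x‖⁻¹ • x)
    ⟨F.smul_mem _ hx, by simp [norm_smul, hxn]⟩
  have hxy := one_sub_two_mul_one_add_le_norm_smul_add (hf i) hy (half_pos hε).le (hfy i)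
    (by rw [← dist_eq_norm]; exact hi.le) (norm_nonneg x)
  rw [smul_inv_smul₀ hxn] at hxy
  rw [hy]
  linarith

end

theorem stmt_2_general (X : Type*) [NormedAddCommGroup X] [NormedSpace ℝ X] :
    IsOctahedral X ↔
      ∀ n : ℕ, ∀ ε : ℝ, 0 < ε → ∀ x : Fin n → X, (∀ i, ‖x i‖ = 1) →
        ∃ y : X, ‖y‖ = 1 ∧ ∀ i, 2 - ε ≤ ‖x i + y‖ :=
  ⟨fun h _ _ hε => h.exists_two_sub_le_norm_add hε,
    isOctahedral_of_forall_exists_two_sub_le_norm_add⟩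

/-- a Banach space is octahedral iff for every finite family of norm-one
vectors and every `ε > 0` there is a norm-one `y` with `‖xᵢ + y‖ ≥ 2 - ε` for all `i`. -/
theorem stmt_2 (X : Type*) [NormedAddCommGroup X] [NormedSpace ℝ X] [CompleteSpace X] :
    IsOctahedral X ↔
      ∀ n : ℕ, ∀ ε : ℝ, 0 < ε → ∀ x : Fin n → X, (∀ i, ‖x i‖ = 1) →
        ∃ y : X, ‖y‖ = 1 ∧ ∀ i, 2 - ε ≤ ‖x i + y‖ :=
  stmt_2_general X
end

section
/- With the notation of the Talagrand construction: for every n ∈ ℕ, distinct p₁,...,pₙ ∈ ℕ, and α₁,...,αₙ ∈ ℝ, choosing I ⊆ ℕ with pᵢ ∈ I iff αᵢ > 0, one has |∑ᵢ αᵢ ∫_Δ f_{pᵢ} dρ_I| = ∑ᵢ |αᵢ|·(sᵢ−2)/sᵢ ≥ (1/3)∑ᵢ |αᵢ|, where sᵢ ≥ 3 is determined by pᵢ ∈ N_{sᵢ}. Consequently the functionals induced by f_{p} on the span of the measures ρ_I span an ℓ₁-sequence with lower constant 1/3. -/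
open MeasureTheory

/-- The measure `ν^{(i)}_{s,I}` on `{0,1}`: `(1/s)δ₀ + ((s-1)/s)δ₁` if `i ∈ I`
(`mem = true`), and `((s-1)/s)δ₀ + (1/s)δ₁` otherwise. -/
noncomputable def nuTal (s : ℕ) (mem : Bool) : Measure Bool :=
  if mem then
    ((s : ENNReal))⁻¹ • Measure.dirac false + (((s : ENNReal) - 1) / s) • Measure.dirac true
  else
    (((s : ENNReal) - 1) / s) • Measure.dirac false + ((s : ENNReal))⁻¹ • Measure.dirac true

lemma nuTal_integral (s : ℕ) (hs : 3 ≤ s) (mem : Bool) :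
    ∫ b, (if b then (1 : ℝ) else -1) ∂(nuTal s mem)
      = (if mem then 1 else -1) * (((s : ℝ) - 2) / s) := by
  have hs0 : (s : ℝ) ≠ 0 := by positivity
  have hse0 : (s : ENNReal) ≠ 0 := by exact_mod_cast Nat.pos_of_ne_zero (by omega) |>.ne'
  have h1 : ((s : ENNReal))⁻¹.toReal = (s : ℝ)⁻¹ := by simp
  have h2 : ((((s : ENNReal)) - 1) / s).toReal = ((s : ℝ) - 1) / s := by
    rw [ENNReal.toReal_div]
    congr 1
    · rw [ENNReal.toReal_sub_of_le (by exact_mod_cast Nat.one_le_of_lt hs) (by simp)]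
      simp
  have hfin1 : IsFiniteMeasure (((s : ENNReal))⁻¹ • Measure.dirac (α := Bool) false) := by
    constructor; simp [ENNReal.inv_lt_top]; exact_mod_cast Nat.pos_of_ne_zero (by omega : s ≠ 0)
  have hfin1' : IsFiniteMeasure (((s : ENNReal))⁻¹ • Measure.dirac (α := Bool) true) := by
    constructor; simp [ENNReal.inv_lt_top]; exact_mod_cast Nat.pos_of_ne_zero (by omega : s ≠ 0)
  have hfin2 : IsFiniteMeasure (((((s : ENNReal)) - 1) / s) • Measure.dirac (α := Bool) false) := by
    constructor
    simp only [Measure.smul_apply, smul_eq_mul, measure_univ, mul_one]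
    exact ENNReal.div_lt_top (by simp) hse0
  have hfin2' : IsFiniteMeasure (((((s : ENNReal)) - 1) / s) • Measure.dirac (α := Bool) true) := by
    constructor
    simp only [Measure.smul_apply, smul_eq_mul, measure_univ, mul_one]
    exact ENNReal.div_lt_top (by simp) hse0
  cases mem <;>
  · simp only [nuTal, if_true, if_false, Bool.false_eq_true]
    rw [integral_add_measure .of_finite .of_finite,
      integral_smul_measure, integral_smul_measure, integral_dirac, integral_dirac]
    simp [h1, h2]
    field_simp
    ring

/-- in the Talagrand construction, choosing `I` with `pᵢ ∈ I` iff `αᵢ > 0`,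
one has `|∑ᵢ αᵢ ∫ f_{pᵢ} dρ_I| = ∑ᵢ |αᵢ|(sᵢ-2)/sᵢ ≥ (1/3)∑ᵢ |αᵢ|`, where `sᵢ = σ(pᵢ) ≥ 3`
and `ρ_I` is the product measure characterized by independent coordinates with marginals
`ν^{(i)}_{σ(i), I}`. -/
theorem stmt_11 (σ : ℕ → ℕ) (hσ3 : ∀ i, 3 ≤ σ i)
    (hσinf : ∀ s, 3 ≤ s → (σ ⁻¹' {s}).Infinite)
    (n : ℕ) (p : Fin n → ℕ) (hp : Function.Injective p) (α : Fin n → ℝ)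
    (I : Set ℕ) [DecidablePred (· ∈ I)] (hI : ∀ i, p i ∈ I ↔ 0 < α i)
    (ρ : Measure (ℕ → Bool)) [IsProbabilityMeasure ρ]
    (hmarg : ∀ i : ℕ, ρ.map (fun x => x i) = nuTal (σ i) (decide (i ∈ I)))
    (hind : ProbabilityTheory.iIndepFun
      (fun (i : ℕ) (x : ℕ → Bool) => x i) ρ) :
    |∑ i, α i * ∫ x, (if x (p i) then (1 : ℝ) else -1) ∂ρ| =
        ∑ i, |α i| * ((σ (p i) : ℝ) - 2) / (σ (p i)) ∧
      (1 / 3 : ℝ) * ∑ i, |α i| ≤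
        |∑ i, α i * ∫ x, (if x (p i) then (1 : ℝ) else -1) ∂ρ| := by
  have hint : ∀ i : Fin n, ∫ x, (if x (p i) then (1 : ℝ) else -1) ∂ρ =
      (if decide (p i ∈ I) then (1:ℝ) else -1) * (((σ (p i) : ℝ) - 2) / (σ (p i))) := by
    intro i
    have hm : Measurable (fun x : ℕ → Bool => x (p i)) := measurable_pi_apply _
    have := integral_map (μ := ρ) hm.aemeasurable
      (f := fun b : Bool => (if b then (1:ℝ) else -1))
      (Measurable.aestronglyMeasurable (by measurability))
    rw [hmarg (p i)] at this
    rw [← this, nuTal_integral _ (hσ3 (p i))]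
  have hterm : ∀ i : Fin n, α i * ∫ x, (if x (p i) then (1 : ℝ) else -1) ∂ρ =
      |α i| * ((σ (p i) : ℝ) - 2) / (σ (p i)) := by
    intro i
    rw [hint i, mul_div_assoc]
    rcases lt_trichotomy 0 (α i) with h | h | h
    · rw [(decide_eq_true ((hI i).2 h) : decide (p i ∈ I) = true)]
      simp only [if_true]
      rw [abs_of_pos h]; ring
    · simp [← h]
    · have : decide (p i ∈ I) = false := decide_eq_false (fun hm => absurd ((hI i).1 hm) (by linarith))
      rw [this, abs_of_neg h]; simp
  have hnonneg : ∀ i : Fin n, 0 ≤ |α i| * ((σ (p i) : ℝ) - 2) / (σ (p i)) := by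
    intro i
    have h3 : (3:ℝ) ≤ σ (p i) := by exact_mod_cast hσ3 (p i)
    exact div_nonneg (mul_nonneg (abs_nonneg _) (by linarith)) (by linarith)
  have habs : |∑ i, α i * ∫ x, (if x (p i) then (1 : ℝ) else -1) ∂ρ| =
      ∑ i, |α i| * ((σ (p i) : ℝ) - 2) / (σ (p i)) := by
    rw [Finset.sum_congr rfl (fun i _ => hterm i),
      abs_of_nonneg (Finset.sum_nonneg fun i _ => hnonneg i)]
  refine ⟨habs, ?_⟩
  rw [habs, Finset.mul_sum]
  refine Finset.sum_le_sum fun i _ => ?_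
  have h3 : (3:ℝ) ≤ σ (p i) := by exact_mod_cast hσ3 (p i)
  rw [mul_div_assoc, mul_comm]
  have hds : (1:ℝ)/3 ≤ ((σ (p i) : ℝ) - 2) / (σ (p i)) := by
    rw [div_le_div_iff₀ (by norm_num) (by linarith)]; linarith
  exact mul_le_mul_of_nonneg_left hds (abs_nonneg _)
end

section
/- Let X be a Banach space, 𝒞 ⊆ B_{X*} convex, and suppose for every n ∈ ℕ, every ε > 0, and every average (1/n)∑ᵢ Sᵢ of slices of 𝒞, there exist σ₁, σ₂ ∈ (1/n)∑ᵢ Sᵢ and an element f of a fixed set A ⊆ B_X with (σ₁ − σ₂)(f) > 2 − ε. Then the same diameter-2 witnessing property holds for averages of slices of K = conv(𝒞 ∪ −𝒞): for every n, ε and slices S₁,...,Sₙ of K there exist x*, y* in (1/n)∑ᵢ Sᵢ and f ∈ A with (x* − y*)(f) > 2 − ε. -/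
open Pointwise NormedSpace

/-- The slice of a bounded set `C ⊆ X*` determined by `φ ∈ X**` and `α > 0`. -/
noncomputable def dualSlice (X : Type*) [NormedAddCommGroup X] [NormedSpace ℝ X]
    (C : Set (StrongDual ℝ X)) (φ : StrongDual ℝ (StrongDual ℝ X)) (α : ℝ) : Set (StrongDual ℝ X) :=
  {g ∈ C | sSup ((fun g => φ g) '' C) - α < φ g}

/-- if averages of slices of `𝒞` contain pairs whose difference is nearly
normed by elements of `A`, the same holds for averages of slices of `K = conv(𝒞 ∪ -𝒞)`. -/
theorem stmt_13 (X : Type*) [NormedAddCommGroup X] [NormedSpace ℝ X] [CompleteSpace X]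
    (𝒞 : Set (StrongDual ℝ X)) (h𝒞 : 𝒞 ⊆ Metric.closedBall 0 1) (hconv : Convex ℝ 𝒞)
    (A : Set X) (hA : A ⊆ Metric.closedBall 0 1)
    (h : ∀ n : ℕ, 0 < n → ∀ ε : ℝ, 0 < ε →
      ∀ (φ : Fin n → StrongDual ℝ (StrongDual ℝ X)) (α : Fin n → ℝ), (∀ i, 0 < α i) →
        ∃ σ₁ ∈ (n : ℝ)⁻¹ • ∑ i : Fin n, dualSlice X 𝒞 (φ i) (α i),
        ∃ σ₂ ∈ (n : ℝ)⁻¹ • ∑ i : Fin n, dualSlice X 𝒞 (φ i) (α i),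
        ∃ f ∈ A, 2 - ε < σ₁ f - σ₂ f) :
    ∀ n : ℕ, 0 < n → ∀ ε : ℝ, 0 < ε →
      ∀ (φ : Fin n → StrongDual ℝ (StrongDual ℝ X)) (α : Fin n → ℝ), (∀ i, 0 < α i) →
        ∃ σ₁ ∈ (n : ℝ)⁻¹ • ∑ i : Fin n, dualSlice X (convexHull ℝ (𝒞 ∪ -𝒞)) (φ i) (α i),
        ∃ σ₂ ∈ (n : ℝ)⁻¹ • ∑ i : Fin n, dualSlice X (convexHull ℝ (𝒞 ∪ -𝒞)) (φ i) (α i),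
        ∃ f ∈ A, 2 - ε < σ₁ f - σ₂ f := by
  classical
  intro n hn ε hε φ α hα
  set K : Set (StrongDual ℝ X) := convexHull ℝ (𝒞 ∪ -𝒞) with hK
  -- 𝒞 ∪ -𝒞 ⊆ closed ball, hence K too
  have hneg : -𝒞 ⊆ Metric.closedBall 0 1 := by
    intro g hg
    rw [Set.mem_neg] at hg
    have := h𝒞 hg
    simpa [mem_closedBall_zero_iff] using (mem_closedBall_zero_iff.mp this)
  have hKball : K ⊆ Metric.closedBall 0 1 :=
    convexHull_min (Set.union_subset h𝒞 hneg) (convex_closedBall _ _)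
  -- boundedness of functionals on subsets of the ball
  have bdd : ∀ (χ : StrongDual ℝ (StrongDual ℝ X)) (S : Set (StrongDual ℝ X)), S ⊆ Metric.closedBall 0 1 →
      ∀ y ∈ (fun g => χ g) '' S, y ≤ ‖χ‖ := by
    rintro χ S hS _ ⟨g, hg, rfl⟩
    calc χ g ≤ ‖χ g‖ := le_abs_self _
      _ ≤ ‖χ‖ * ‖g‖ := χ.le_opNorm g
      _ ≤ ‖χ‖ * 1 := by
          have := mem_closedBall_zero_iff.mp (hS hg)
          exact mul_le_mul_of_nonneg_left this (norm_nonneg χ)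
      _ = ‖χ‖ := mul_one _
  have bddA : ∀ (χ : StrongDual ℝ (StrongDual ℝ X)) (S : Set (StrongDual ℝ X)), S ⊆ Metric.closedBall 0 1 →
      BddAbove ((fun g => χ g) '' S) := fun χ S hS => ⟨‖χ‖, fun y hy => bdd χ S hS y hy⟩
  -- key: pick per-index signs and slices of 𝒞 mapping into slices of K
  have key : ∀ i : Fin n, ∃ ψ : StrongDual ℝ (StrongDual ℝ X), ∃ s : ℝ, (s = 1 ∨ s = -1) ∧
      ∀ g ∈ dualSlice X 𝒞 ψ (α i), s • g ∈ dualSlice X K (φ i) (α i) := by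
    intro i
    by_cases hc : sSup ((fun g => (-(φ i)) g) '' 𝒞) ≤ sSup ((fun g => (φ i) g) '' 𝒞)
    · refine ⟨φ i, 1, Or.inl rfl, ?_⟩
      rintro g ⟨hg𝒞, hgslice⟩
      have hgK : g ∈ K := subset_convexHull ℝ _ (Or.inl hg𝒞)
      refine ⟨by simpa using hgK, ?_⟩
      have hsup : sSup ((fun g => (φ i) g) '' K) ≤ sSup ((fun g => (φ i) g) '' 𝒞) := by
        apply csSup_le ⟨_, Set.mem_image_of_mem _ hgK⟩
        rintro _ ⟨k, hk, rfl⟩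
        have hk' : k ∈ {x : StrongDual ℝ X | (φ i) x ≤ sSup ((fun g => (φ i) g) '' 𝒞)} := by
          refine convexHull_min ?_ ?_ hk
          · rintro x (hx | hx)
            · exact le_csSup (bddA _ _ h𝒞) (Set.mem_image_of_mem _ hx)
            · rw [Set.mem_neg] at hx
              have : (φ i) x = (-(φ i)) (-x) := by simp
              rw [Set.mem_setOf_eq, this]
              exact le_trans (le_csSup (bddA (-(φ i)) _ h𝒞) (Set.mem_image_of_mem _ hx)) hc
          · exact convex_halfSpace_le (φ i).toLinearMap.isLinear _
        exact hk'
      simp only [one_smul]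
      calc sSup ((fun g => (φ i) g) '' K) - α i
          ≤ sSup ((fun g => (φ i) g) '' 𝒞) - α i := by linarith
        _ < (φ i) g := hgslice
    · refine ⟨-(φ i), -1, Or.inr rfl, ?_⟩
      push_neg at hc
      rintro g ⟨hg𝒞, hgslice⟩
      have hgK : -g ∈ K := subset_convexHull ℝ _ (Or.inr (by simpa using hg𝒞))
      have hval : (φ i) ((-1 : ℝ) • g) = (-(φ i)) g := by simp
      refine ⟨by convert hgK using 1; ext x; simp, ?_⟩
      have hsup : sSup ((fun g => (φ i) g) '' K) ≤ sSup ((fun g => (-(φ i)) g) '' 𝒞) := by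
        apply csSup_le ⟨_, Set.mem_image_of_mem _ hgK⟩
        rintro _ ⟨k, hk, rfl⟩
        have hk' : k ∈ {x : StrongDual ℝ X | (φ i) x ≤ sSup ((fun g => (-(φ i)) g) '' 𝒞)} := by
          refine convexHull_min ?_ ?_ hk
          · rintro x (hx | hx)
            · exact le_trans (le_csSup (bddA _ _ h𝒞) (Set.mem_image_of_mem _ hx)) hc.le
            · rw [Set.mem_neg] at hx
              have : (φ i) x = (-(φ i)) (-x) := by simp
              rw [Set.mem_setOf_eq, this]
              exact le_csSup (bddA (-(φ i)) _ h𝒞) (Set.mem_image_of_mem _ hx)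
          · exact convex_halfSpace_le (φ i).toLinearMap.isLinear _
        exact hk'
      rw [hval]
      calc sSup ((fun g => (φ i) g) '' K) - α i
          ≤ sSup ((fun g => (-(φ i)) g) '' 𝒞) - α i := by linarith
        _ < (-(φ i)) g := hgslice
  choose ψ s hs hsub using key
  obtain ⟨σ₁, hσ₁, σ₂, hσ₂, f, hf, hlt⟩ := h n hn ε hε ψ α hα
  -- decompose σ₁ and σ₂
  obtain ⟨τ₁, hτ₁, rfl⟩ := hσ₁
  obtain ⟨τ₂, hτ₂, rfl⟩ := hσ₂
  obtain ⟨a, ha, rfl⟩ := (Set.mem_fintype_sum _ _).mp hτ₁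
  obtain ⟨b, hb, rfl⟩ := (Set.mem_fintype_sum _ _).mp hτ₂
  -- construct elements of the averages of slices of K
  set c₁ : Fin n → StrongDual ℝ X := fun i => s i • (if s i = 1 then a i else b i) with hc₁
  set c₂ : Fin n → StrongDual ℝ X := fun i => s i • (if s i = 1 then b i else a i) with hc₂
  have hc₁mem : ∀ i, c₁ i ∈ dualSlice X K (φ i) (α i) := by
    intro i
    rcases hs i with h1 | h1
    · have e : c₁ i = s i • a i := by simp only [hc₁]; rw [if_pos h1]
      rw [e]; exact hsub i _ (ha i)
    · have h2 : s i ≠ 1 := by rw [h1]; norm_num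
      have e : c₁ i = s i • b i := by simp only [hc₁]; rw [if_neg h2]
      rw [e]; exact hsub i _ (hb i)
  have hc₂mem : ∀ i, c₂ i ∈ dualSlice X K (φ i) (α i) := by
    intro i
    rcases hs i with h1 | h1
    · have e : c₂ i = s i • b i := by simp only [hc₂]; rw [if_pos h1]
      rw [e]; exact hsub i _ (hb i)
    · have h2 : s i ≠ 1 := by rw [h1]; norm_num
      have e : c₂ i = s i • a i := by simp only [hc₂]; rw [if_neg h2]
      rw [e]; exact hsub i _ (ha i)
  refine ⟨(n : ℝ)⁻¹ • ∑ i, c₁ i, ⟨∑ i, c₁ i,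
      (Set.mem_fintype_sum _ _).mpr ⟨c₁, hc₁mem, rfl⟩, rfl⟩,
    (n : ℝ)⁻¹ • ∑ i, c₂ i, ⟨∑ i, c₂ i,
      (Set.mem_fintype_sum _ _).mpr ⟨c₂, hc₂mem, rfl⟩, rfl⟩, f, hf, ?_⟩
  have hdiff : ∀ i, c₁ i f - c₂ i f = a i f - b i f := by
    intro i
    rcases hs i with h1 | h1
    · simp only [hc₁, hc₂]
      rw [if_pos h1, if_pos h1, h1]
      simp
    · have h2 : s i ≠ 1 := by rw [h1]; norm_num
      simp only [hc₁, hc₂]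
      rw [if_neg h2, if_neg h2, h1]
      simp only [ContinuousLinearMap.smul_apply, smul_eq_mul]
      ring
  have e1 : (∑ i, c₁ i) f - (∑ i, c₂ i) f = (∑ i, a i) f - (∑ i, b i) f := by
    simp only [ContinuousLinearMap.sum_apply, ← Finset.sum_sub_distrib]
    exact Finset.sum_congr rfl fun i _ => hdiff i
  calc 2 - ε < ((n : ℝ)⁻¹ • ∑ i, a i) f - ((n : ℝ)⁻¹ • ∑ i, b i) f := hlt
    _ = (n : ℝ)⁻¹ * ((∑ i, a i) f - (∑ i, b i) f) := by
        simp [ContinuousLinearMap.smul_apply, mul_sub]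
    _ = (n : ℝ)⁻¹ * ((∑ i, c₁ i) f - (∑ i, c₂ i) f) := by rw [e1]
    _ = ((n : ℝ)⁻¹ • ∑ i, c₁ i) f - ((n : ℝ)⁻¹ • ∑ i, c₂ i) f := by
        simp [ContinuousLinearMap.smul_apply, mul_sub]
end
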